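/- Let X be a CAT(-1) space, H a horoball in X with ξ₀ ∉ H ∪ ∂∞H. Then for every geodesic ray or line γ starting from ξ₀ that meets H in a segment [x,y], one has ph_H(γ) ≤ ℓ_H(γ) ≤ ph_H(γ) + 2·log(1+√2), where ph_H(γ) = 2·sup_t β_H(γ(ت)) is twice the maximal height of γ inside H and ℓ_H(γ) = d(x,y) is the length of γ ∩ H. -/

import Mathlib

open Filter Set Metric

/-- `γ` is an isometric (unit-speed geodesic) map on the parameter set `D`. -/
def IsGeodOn {X : Type*} [MetricSpace X] (γ : ℝ → X) (D : Set ℝ) : Prop :=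
  ∀ s ∈ D, ∀ t ∈ D, dist (γ s) (γ t) = |s - t|

/-- A geodesic segment from `x` to `y`, parametrized by arclength on `[0, dist x y]`. -/
def IsGeodesicFrom {X : Type*} [MetricSpace X] (γ : ℝ → X) (x y : X) : Prop :=
  IsGeodOn γ (Set.Icc 0 (dist x y)) ∧ γ 0 = x ∧ γ (dist x y) = y

/-- A geodesic metric space: any two points are joined by a geodesic segment. -/
def GeodesicSpace (X : Type*) [MetricSpace X] : Prop :=
  ∀ x y : X, ∃ γ : ℝ → X, IsGeodesicFrom γ x y

/-- The CAT(-1) comparison property: distances in a geodesic triangle are bounded by the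
corresponding distances in a comparison triangle in the hyperbolic plane `UpperHalfPlane`
(of curvature -1). -/
def CATNegOne (X : Type*) [MetricSpace X] : Prop :=
  ∀ (x y z : X) (f g : ℝ → X), IsGeodesicFrom f x y → IsGeodesicFrom g x z →
  ∀ (x' y' z' : UpperHalfPlane), dist x' y' = dist x y → dist x' z' = dist x z →
    dist y' z' = dist y z →
  ∀ (f' g' : ℝ → UpperHalfPlane), IsGeodesicFrom f' x' y' → IsGeodesicFrom g' x' z' →
  ∀ s ∈ Set.Icc (0:ℝ) (dist x y), ∀ t ∈ Set.Icc (0:ℝ) (dist x z),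
    dist (f s) (g t) ≤ dist (f' s) (g' t)

/-- A subset is (geodesically) convex if it contains every geodesic segment between
two of its points. -/
def MGeodConvex {X : Type*} [MetricSpace X] (C : Set X) : Prop :=
  ∀ x ∈ C, ∀ y ∈ C, ∀ γ : ℝ → X, IsGeodesicFrom γ x y →
    ∀ t ∈ Set.Icc 0 (dist x y), γ t ∈ C

/-- The parameter domain of a geodesic segment or ray starting at time `0`. -/
def SegOrRayFrom (D : Set ℝ) : Prop :=
  (∃ L : ℝ, 0 ≤ L ∧ D = Set.Icc 0 L) ∨ D = Set.Ici 0

/-- Two geodesic lines have the same point at infinity in the negative direction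
(their negative rays are at finite Hausdorff distance). -/
def AsympNeg {X : Type*} [MetricSpace X] (γ γ' : ℝ → X) : Prop :=
  ∃ C : ℝ, (∀ t ≤ (0:ℝ), ∃ s ≤ (0:ℝ), dist (γ t) (γ' s) ≤ C) ∧
    (∀ s ≤ (0:ℝ), ∃ t ≤ (0:ℝ), dist (γ' s) (γ t) ≤ C)

open scoped UpperHalfPlane

noncomputable def phiGeo (t : ℝ) : ℍ :=
  UpperHalfPlane.mk ⟨Real.tanh t, (Real.cosh t)⁻¹⟩
    (show (0:ℝ) < (Real.cosh t)⁻¹ by positivity)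

@[simp] lemma phiGeo_re (t : ℝ) : (phiGeo t).re = Real.tanh t := rfl
@[simp] lemma phiGeo_im (t : ℝ) : (phiGeo t).im = (Real.cosh t)⁻¹ := rfl

lemma cosh_dist_phiGeo (z : ℍ) (t : ℝ) :
    Real.cosh (dist z (phiGeo t)) =
      ((z.re ^ 2 + z.im ^ 2 + 1) * Real.cosh t - 2 * z.re * Real.sinh t) / (2 * z.im) := by
  have hc := Real.cosh_pos t
  have hz := z.im_pos
  have h1 : Real.cosh t ^ 2 - Real.sinh t ^ 2 = 1 := Real.cosh_sq_sub_sinh_sq t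
  rw [UpperHalfPlane.cosh_dist', phiGeo_re, phiGeo_im, Real.tanh_eq_sinh_div_cosh]
  field_simp
  linear_combination (-1 : ℝ) * h1

lemma dist_eq_of_cosh_eq {d r : ℝ} (hd : 0 ≤ d) (hr : 0 ≤ r)
    (h : Real.cosh d = Real.cosh r) : d = r := by
  by_contra hne
  rcases lt_or_gt_of_ne hne with hlt | hlt
  · have : Real.cosh d < Real.cosh r :=
      Real.cosh_lt_cosh.mpr (by rwa [abs_of_nonneg hd, abs_of_nonneg hr])
    linarith
  · have : Real.cosh r < Real.cosh d :=
      Real.cosh_lt_cosh.mpr (by rwa [abs_of_nonneg hd, abs_of_nonneg hr])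
    linarith

lemma dist_phiGeo_phiGeo (u v : ℝ) : dist (phiGeo u) (phiGeo v) = |u - v| := by
  apply dist_eq_of_cosh_eq dist_nonneg (abs_nonneg _)
  rw [Real.cosh_abs]
  have hu := Real.cosh_pos u
  have hv := Real.cosh_pos v
  have h1 : Real.cosh u ^ 2 - Real.sinh u ^ 2 = 1 := Real.cosh_sq_sub_sinh_sq u
  have h2 : Real.cosh v ^ 2 - Real.sinh v ^ 2 = 1 := Real.cosh_sq_sub_sinh_sq v
  rw [UpperHalfPlane.cosh_dist', phiGeo_re, phiGeo_im, phiGeo_re, phiGeo_im,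
    Real.tanh_eq_sinh_div_cosh, Real.tanh_eq_sinh_div_cosh, Real.cosh_sub]
  field_simp
  linear_combination (-(Real.cosh v ^ 2)) * h1 +
    (-(Real.cosh u ^ 2)) * h2

lemma cosh_dist_phiGeo_zero (z : ℍ) (t : ℝ) :
    Real.cosh (dist z (phiGeo 0)) =
      (Real.cosh (dist z (phiGeo (-t))) + Real.cosh (dist z (phiGeo t))) / (2 * Real.cosh t) := by
  rw [cosh_dist_phiGeo, cosh_dist_phiGeo, cosh_dist_phiGeo, Real.cosh_neg, Real.sinh_neg,
    Real.cosh_zero, Real.sinh_zero]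
  have h1 := z.im_pos
  have h2 := Real.cosh_pos t
  field_simp
  ring

noncomputable def affH (l m : ℝ) (hl : 0 < l) (z : ℍ) : ℍ :=
  UpperHalfPlane.mk ⟨l * z.re + m, l * z.im⟩
    (show (0:ℝ) < l * z.im from mul_pos hl z.im_pos)

@[simp] lemma affH_re (l m hl) (z : ℍ) : (affH l m hl z).re = l * z.re + m := rfl
@[simp] lemma affH_im (l m hl) (z : ℍ) : (affH l m hl z).im = l * z.im := rfl

lemma dist_affH (l m : ℝ) (hl : 0 < l) (z w : ℍ) :
    dist (affH l m hl z) (affH l m hl w) = dist z w := by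
  apply dist_eq_of_cosh_eq dist_nonneg dist_nonneg
  rw [UpperHalfPlane.cosh_dist', UpperHalfPlane.cosh_dist', affH_re, affH_im, affH_re, affH_im]
  have h1 := z.im_pos
  have h2 := w.im_pos
  field_simp
  ring

lemma isGeodesicFrom_of_line {Y : Type*} [MetricSpace Y] (ψ : ℝ → Y)
    (h : ∀ s t, dist (ψ s) (ψ t) = |s - t|) (u v : ℝ) :
    ∃ g : ℝ → Y, IsGeodesicFrom g (ψ u) (ψ v) := by
  refine ⟨fun t => ψ (u + (if u ≤ v then t else -t)), ?_, ?_, ?_⟩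
  · intro a _ b _
    rw [h]
    split_ifs with hc
    · congr 1; ring
    · rw [show u + -a - (u + -b) = -(a-b) by ring, abs_neg]
  · simp
  · have hd : dist (ψ u) (ψ v) = |u - v| := h u v
    rw [hd]
    split_ifs with hc
    · rw [abs_of_nonpos (by linarith : u - v ≤ 0)]
      norm_num
    · rw [abs_of_nonneg (by linarith : 0 ≤ u - v)]
      norm_num

lemma exists_geodesicH (z w : ℍ) : ∃ g : ℝ → ℍ, IsGeodesicFrom g z w := by
  by_cases hre : z.re = w.re
  · set ψ : ℝ → ℍ := fun t => UpperHalfPlane.mk ⟨z.re, Real.exp t⟩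
      (show (0:ℝ) < Real.exp t from Real.exp_pos t) with hψ
    have hiso : ∀ s t, dist (ψ s) (ψ t) = |s - t| := by
      intro s t
      rw [UpperHalfPlane.dist_of_re_eq (show (ψ s).re = (ψ t).re from rfl)]
      show dist (Real.log (Real.exp s)) (Real.log (Real.exp t)) = _
      rw [Real.log_exp, Real.log_exp, Real.dist_eq]
    have hz : ψ (Real.log z.im) = z := by
      apply UpperHalfPlane.ext'
      · rfl
      · show Real.exp (Real.log z.im) = z.im
        exact Real.exp_log z.im_pos
    have hw : ψ (Real.log w.im) = w := by
      apply UpperHalfPlane.ext'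
      · exact hre
      · show Real.exp (Real.log w.im) = w.im
        exact Real.exp_log w.im_pos
    obtain ⟨g, hg⟩ := isGeodesicFrom_of_line ψ hiso (Real.log z.im) (Real.log w.im)
    rw [hz, hw] at hg
    exact ⟨g, hg⟩
  · set μ : ℝ := (z.re ^ 2 + z.im ^ 2 - w.re ^ 2 - w.im ^ 2) / (2 * (z.re - w.re)) with hμ
    set r : ℝ := Real.sqrt ((z.re - μ) ^ 2 + z.im ^ 2) with hr
    have hrpos : 0 < r :=
      Real.sqrt_pos.mpr (by nlinarith [sq_nonneg (z.re - μ), z.im_pos])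
    have hzr : (z.re - μ) ^ 2 + z.im ^ 2 = r ^ 2 :=
      (Real.sq_sqrt (by positivity)).symm
    have hwr : (w.re - μ) ^ 2 + w.im ^ 2 = r ^ 2 := by
      rw [← hzr, hμ]
      have : z.re - w.re ≠ 0 := sub_ne_zero.mpr hre
      field_simp
      ring
    have hparam : ∀ p : ℍ, (p.re - μ) ^ 2 + p.im ^ 2 = r ^ 2 →
        ∃ u, affH r μ hrpos (phiGeo u) = p := by
      intro p hp
      have hy : 0 < p.im := p.im_pos
      have hx : r + (p.re - μ) > 0 := by nlinarith [sq_nonneg (p.re - μ + r)]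
      refine ⟨Real.log ((r + (p.re - μ)) / p.im), ?_⟩
      have he : Real.exp (Real.log ((r + (p.re - μ)) / p.im)) = (r + (p.re - μ)) / p.im :=
        Real.exp_log (by positivity)
      set u := Real.log ((r + (p.re - μ)) / p.im)
      have hcosh : Real.cosh u = r / p.im := by
        rw [Real.cosh_eq, he, Real.exp_neg, he]
        field_simp
        nlinarith [hp]
      have hsinh : Real.sinh u = (p.re - μ) / p.im := by
        rw [Real.sinh_eq, he, Real.exp_neg, he]
        field_simp
        nlinarith [hp]
      apply UpperHalfPlane.ext'
      · show r * Real.tanh u + μ = p.re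
        rw [Real.tanh_eq_sinh_div_cosh, hsinh, hcosh]
        field_simp
        ring
      · show r * (Real.cosh u)⁻¹ = p.im
        rw [hcosh]
        field_simp
    obtain ⟨u, hu⟩ := hparam z hzr
    obtain ⟨v, hv⟩ := hparam w hwr
    have hiso : ∀ s t, dist (affH r μ hrpos (phiGeo s)) (affH r μ hrpos (phiGeo t)) = |s - t| := by
      intro s t
      rw [dist_affH, dist_phiGeo_phiGeo]
    obtain ⟨g, hg⟩ := isGeodesicFrom_of_line _ hiso u v
    rw [hu, hv] at hg
    exact ⟨g, hg⟩



lemma exists_comparison (a b c : ℝ) (ha : 0 ≤ a) (hb : 0 ≤ b) (hc : 0 < c)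
    (tab : c ≤ a + b) (tac : a ≤ b + c) (tbc : b ≤ a + c) :
    ∃ z' : ℍ, dist (phiGeo (-(c/2))) z' = a ∧ dist (phiGeo (c/2)) z' = b := by
  obtain ⟨A, hA⟩ : ∃ A, A = Real.cosh a := ⟨_, rfl⟩
  obtain ⟨B, hB⟩ : ∃ B, B = Real.cosh b := ⟨_, rfl⟩
  obtain ⟨C, hC⟩ : ∃ C, C = Real.cosh (c/2) := ⟨_, rfl⟩
  obtain ⟨S2, hS2⟩ : ∃ S2, S2 = Real.sinh (c/2) := ⟨_, rfl⟩
  have hCpos : 0 < C := hC ▸ Real.cosh_pos _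
  have hS2pos : 0 < S2 := hS2 ▸ Real.sinh_pos_iff.mpr (by linarith)
  have hApos : 0 < A := hA ▸ Real.cosh_pos _
  have hBpos : 0 < B := hB ▸ Real.cosh_pos _
  have key : 0 ≤ (A + B) ^ 2 * S2 ^ 2 - 4 * C ^ 2 * S2 ^ 2 - (A - B) ^ 2 * C ^ 2 := by
    have hx1 : Real.cosh (a - b) ≤ Real.cosh c :=
      Real.cosh_le_cosh.mpr (by
        rw [abs_of_pos hc]
        exact abs_sub_le_iff.mpr ⟨by linarith, by linarith⟩)
    have hx2 : Real.cosh c ≤ Real.cosh (a + b) :=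
      Real.cosh_le_cosh.mpr (by
        rw [abs_of_pos hc, abs_of_nonneg (by linarith : (0:ℝ) ≤ a + b)]
        exact tab)
    rw [Real.cosh_sub, ← hA, ← hB] at hx1
    rw [Real.cosh_add, ← hA, ← hB] at hx2
    have hS2sq : S2 ^ 2 = C ^ 2 - 1 := by
      have h := Real.cosh_sq_sub_sinh_sq (c/2)
      rw [← hC, ← hS2] at h
      linarith
    have hC2 : Real.cosh c = 2 * C ^ 2 - 1 := by
      have h := Real.cosh_two_mul (c/2)
      rw [show 2 * (c/2) = c by ring, ← hC, ← hS2] at h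
      linarith
    have hsa : Real.sinh a ^ 2 = A ^ 2 - 1 := by
      have h := Real.cosh_sq_sub_sinh_sq a
      rw [← hA] at h
      linarith
    have hsb : Real.sinh b ^ 2 = B ^ 2 - 1 := by
      have h := Real.cosh_sq_sub_sinh_sq b
      rw [← hB] at h
      linarith
    nlinarith [mul_nonneg (sub_nonneg.2 hx1) (sub_nonneg.2 hx2)]
  obtain ⟨S, hS⟩ : ∃ S, S = (A + B) / C := ⟨_, rfl⟩
  obtain ⟨Dd, hDd⟩ : ∃ Dd, Dd = (A - B) / (2 * S2) := ⟨_, rfl⟩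
  have hSpos : 0 < S := by rw [hS]; positivity
  obtain ⟨disc, hdisc⟩ : ∃ d, d = S ^ 2 - 4 * (1 + Dd ^ 2) := ⟨_, rfl⟩
  have hdiscnn : 0 ≤ disc := by
    have h : disc = ((A + B) ^ 2 * S2 ^ 2 - 4 * C ^ 2 * S2 ^ 2 - (A - B) ^ 2 * C ^ 2) /
        (C ^ 2 * S2 ^ 2) := by
      rw [hdisc, hS, hDd]
      field_simp
      ring
    rw [h]
    exact div_nonneg key (by positivity)
  have hd2 : Real.sqrt disc ^ 2 = S ^ 2 - 4 * (1 + Dd ^ 2) := by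
    rw [Real.sq_sqrt hdiscnn, hdisc]
  obtain ⟨q, hqdef⟩ : ∃ q, q = (S + Real.sqrt disc) / (2 * (1 + Dd ^ 2)) := ⟨_, rfl⟩
  have hdpos : (0:ℝ) < 1 + Dd ^ 2 := by positivity
  have hq : 0 < q := by
    have h0 := Real.sqrt_nonneg disc
    rw [hqdef]; positivity
  have he : q * (2 * (1 + Dd ^ 2)) = S + Real.sqrt disc := by
    rw [hqdef]
    field_simp
  have hqeq' : 4 * (1 + Dd ^ 2) * ((1 + Dd ^ 2) * q ^ 2 - S * q + 1) = 0 := by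
    linear_combination (2*q*(1+Dd^2) - S + Real.sqrt disc) * he + hd2
  have hqeq : (1 + Dd ^ 2) * q ^ 2 - S * q + 1 = 0 :=
    (mul_eq_zero.mp hqeq').resolve_left (by positivity)
  obtain ⟨p, hp⟩ : ∃ p, p = Dd * q := ⟨_, rfl⟩
  have hK : p ^ 2 + q ^ 2 + 1 = S * q := by rw [hp]; linear_combination hqeq
  refine ⟨UpperHalfPlane.mk ⟨p, q⟩ hq, ?_, ?_⟩
  · rw [UpperHalfPlane.dist_comm]
    apply dist_eq_of_cosh_eq dist_nonneg ha
    rw [cosh_dist_phiGeo]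
    show ((p ^ 2 + q ^ 2 + 1) * Real.cosh (-(c/2)) - 2 * p * Real.sinh (-(c/2))) / (2 * q) = Real.cosh a
    rw [Real.cosh_neg, Real.sinh_neg, ← hC, ← hS2, ← hA, hK, hp, hS, hDd]
    field_simp
    ring
  · rw [UpperHalfPlane.dist_comm]
    apply dist_eq_of_cosh_eq dist_nonneg hb
    rw [cosh_dist_phiGeo]
    show ((p ^ 2 + q ^ 2 + 1) * Real.cosh (c/2) - 2 * p * Real.sinh (c/2)) / (2 * q) = Real.cosh b
    rw [← hC, ← hS2, ← hB, hK, hp, hS, hDd]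
    field_simp
    ring

lemma midpoint_cosh_bound {X : Type*} [MetricSpace X]
    (hcat : CATNegOne X) (hgeod : GeodesicSpace X) (x y z : X)
    (f : ℝ → X) (hf : IsGeodesicFrom f x y) (hc : 0 < dist x y) :
    Real.cosh (dist (f (dist x y / 2)) z) ≤
      (Real.cosh (dist x z) + Real.cosh (dist y z)) / (2 * Real.cosh (dist x y / 2)) := by
  obtain ⟨g, hg⟩ := hgeod x z
  set c := dist x y with hcd
  have hcnn : 0 ≤ c := dist_nonneg
  obtain ⟨z', hz'a, hz'b⟩ := exists_comparison (dist x z) (dist y z) c dist_nonneg dist_nonneg hc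
    (by have := dist_triangle x z y; rw [dist_comm z y] at this; linarith)
    (by have := dist_triangle x y z; linarith)
    (by have := dist_triangle y x z; rw [dist_comm y x] at this; linarith)
  have hx'y' : dist (phiGeo (-(c/2))) (phiGeo (c/2)) = c := by
    rw [dist_phiGeo_phiGeo, show -(c/2) - c/2 = -c by ring, abs_neg, abs_of_pos hc]
  have hf' : IsGeodesicFrom (fun u => phiGeo (u - c/2)) (phiGeo (-(c/2))) (phiGeo (c/2)) := by
    refine ⟨?_, ?_, ?_⟩
    · intro a _ b _
      rw [dist_phiGeo_phiGeo, show a - c/2 - (b - c/2) = a - b by ring]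
    · norm_num
    · rw [hx'y']
      show phiGeo (c - c/2) = phiGeo (c/2)
      rw [show c - c/2 = c/2 by ring]
  obtain ⟨g', hg'⟩ := exists_geodesicH (phiGeo (-(c/2))) z'
  have happ := hcat x y z f g hf hg (phiGeo (-(c/2))) (phiGeo (c/2)) z' hx'y' hz'a hz'b
    (fun u => phiGeo (u - c/2)) g' hf' hg' (c/2) ⟨by linarith, by linarith⟩
    (dist x z) ⟨dist_nonneg, le_refl _⟩
  rw [hg.2.2] at happ
  have hgz : g' (dist x z) = z' := by rw [← hz'a]; exact hg'.2.2
  have happ2 : dist (f (c/2)) z ≤ dist (phiGeo (c/2 - c/2)) (g' (dist x z)) := happ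
  rw [hgz, show c/2 - c/2 = (0:ℝ) by ring] at happ2
  have hmono : Real.cosh (dist (f (c/2)) z) ≤ Real.cosh (dist (phiGeo 0) z') := by
    rw [Real.cosh_le_cosh, abs_of_nonneg dist_nonneg, abs_of_nonneg dist_nonneg]
    exact happ2
  refine hmono.trans_eq ?_
  rw [dist_comm, cosh_dist_phiGeo_zero z' (c/2), dist_comm z' (phiGeo (-(c/2))),
    dist_comm z' (phiGeo (c/2)), hz'a, hz'b]
/-- Part of Lemma 3.3: in a CAT(-1) space, let `H = {y | bus y ≥ s}` be a horoball
(with Busemann height function `bus` of the ray `ρ`) and `ξ₀ ∉ H ∪ ∂∞H`. For every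
geodesic ray or line `γ` starting from `ξ₀` meeting `H` in the segment
`[x,y] = [γ t₁, γ t₂]`, one has `ph_H(γ) ≤ ℓ_H(γ) ≤ ph_H(γ) + 2 log(1+√2)`, where
`ph_H(γ) = 2 sup_t max(bus(γ t) - s, 0)` and `ℓ_H(γ) = d(x,y)`. -/
theorem stmt_11 {X : Type*} [MetricSpace X] [ProperSpace X]
    (hcat : CATNegOne X) (hgeod : GeodesicSpace X)
    (ρ : ℝ → X) (hρ : IsGeodOn ρ (Set.Ici 0))
    (bus : X → ℝ)
    (hbus : ∀ y : X, Filter.Tendsto (fun t => t - dist y (ρ t)) Filter.atTop (nhds (bus y)))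
    (s : ℝ) (γ : ℝ → X) (D : Set ℝ) (hγ : IsGeodOn γ D)
    (hcase :
      (∃ ξ₀ : X, D = Set.Ici 0 ∧ γ 0 = ξ₀ ∧ bus ξ₀ < s) ∨
      (D = Set.univ ∧ ¬ Filter.Tendsto (fun t => bus (γ t)) Filter.atBot Filter.atTop))
    (t₁ t₂ : ℝ) (ht₁ : t₁ ∈ D) (ht₂ : t₂ ∈ D) (h12 : t₁ ≤ t₂)
    (hseg : ∀ t ∈ D, (bus (γ t) ≥ s ↔ t ∈ Set.Icc t₁ t₂)) :
    2 * sSup ((fun t => max (bus (γ t) - s) 0) '' D) ≤ dist (γ t₁) (γ t₂) ∧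
      dist (γ t₁) (γ t₂) ≤
        2 * sSup ((fun t => max (bus (γ t) - s) 0) '' D) + 2 * Real.log (1 + Real.sqrt 2) := by
  have hdist : dist (γ t₁) (γ t₂) = t₂ - t₁ := by
    rw [hγ t₁ ht₁ t₂ ht₂, abs_of_nonpos (by linarith : t₁ - t₂ ≤ 0)]
    ring
  have hlip : ∀ x y : X, bus x ≤ bus y + dist x y := by
    intro x y
    refine le_of_tendsto_of_tendsto' (hbus x) ((hbus y).add tendsto_const_nhds) ?_
    intro t
    have h := dist_triangle y x (ρ t)
    rw [dist_comm y x] at h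
    show t - dist x (ρ t) ≤ (t - dist y (ρ t)) + dist x y
    linarith [h]
  obtain ⟨hmemf, hbelow, habove⟩ :
      (∀ u : ℝ, 0 ≤ u → t₁ + u ∈ D) ∧
      (∀ ε : ℝ, 0 < ε → ∃ u ∈ D, u < t₁ ∧ t₁ - u ≤ ε) ∧
      (∀ ε : ℝ, 0 < ε → ∃ u ∈ D, t₂ < u ∧ u - t₂ ≤ ε) := by
    rcases hcase with ⟨ξ₀, hD, hγ0, hξ⟩ | ⟨hD, -⟩
    · subst hD
      have ht₁nn : (0:ℝ) ≤ t₁ := ht₁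
      have ht₁0 : 0 < t₁ := by
        rcases lt_or_eq_of_le ht₁nn with h | h
        · exact h
        · exfalso
          have hb0 : bus (γ 0) < s := by rw [hγ0]; exact hξ
          have : bus (γ 0) ≥ s :=
            (hseg 0 (Set.mem_Ici.mpr (le_refl 0))).mpr ⟨by linarith, by linarith⟩
          linarith
      refine ⟨fun u hu => by exact add_nonneg ht₁nn hu, ?_, ?_⟩
      · intro ε hε
        refine ⟨max (t₁/2) (t₁ - ε), ?_, ?_, ?_⟩
        · exact le_trans (by linarith) (le_max_left (t₁/2) (t₁ - ε))
        · exact max_lt (by linarith) (by linarith)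
        · have := le_max_right (t₁/2) (t₁ - ε)
          linarith
      · intro ε hε
        exact ⟨t₂ + ε, by exact add_nonneg (le_trans ht₁nn h12) hε.le, by linarith, by linarith⟩
    · subst hD
      exact ⟨fun u _ => mem_univ _,
        fun ε hε => ⟨t₁ - ε, mem_univ _, by linarith, by linarith⟩,
        fun ε hε => ⟨t₂ + ε, mem_univ _, by linarith, by linarith⟩⟩
  have hbt₁ : bus (γ t₁) = s := by
    refine le_antisymm ?_ ((hseg t₁ ht₁).mpr ⟨le_refl _, h12⟩)
    by_contra hgt
    push_neg at hgt
    obtain ⟨u, huD, hu1, hu2⟩ := hbelow ((bus (γ t₁) - s)/2) (by linarith)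
    have hbu : bus (γ u) < s := by
      by_contra h
      push_neg at h
      exact absurd ((hseg u huD).mp h).1 (not_le.mpr hu1)
    have h := hlip (γ t₁) (γ u)
    rw [hγ t₁ ht₁ u huD, abs_of_nonneg (by linarith)] at h
    linarith
  have hbt₂ : bus (γ t₂) = s := by
    refine le_antisymm ?_ ((hseg t₂ ht₂).mpr ⟨h12, le_refl _⟩)
    by_contra hgt
    push_neg at hgt
    obtain ⟨u, huD, hu1, hu2⟩ := habove ((bus (γ t₂) - s)/2) (by linarith)
    have hbu : bus (γ u) < s := by
      by_contra h
      push_neg at h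
      exact absurd ((hseg u huD).mp h).2 (not_le.mpr hu1)
    have h := hlip (γ t₂) (γ u)
    rw [hγ t₂ ht₂ u huD, abs_of_nonpos (by linarith)] at h
    linarith
  have himg : ∀ r ∈ (fun t => max (bus (γ t) - s) 0) '' D, r ≤ (t₂ - t₁)/2 := by
    rintro r ⟨t, htD, rfl⟩
    by_cases hmem : t ∈ Set.Icc t₁ t₂
    · have l1 := hlip (γ t) (γ t₁)
      rw [hγ t htD t₁ ht₁, abs_of_nonneg (by linarith [hmem.1])] at l1
      have l2 := hlip (γ t) (γ t₂)
      rw [hγ t htD t₂ ht₂, abs_of_nonpos (by linarith [hmem.2])] at l2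
      rw [hbt₁] at l1
      rw [hbt₂] at l2
      exact max_le (by linarith) (by linarith)
    · have hlt : ¬ (bus (γ t) ≥ s) := fun h => hmem ((hseg t htD).mp h)
      push_neg at hlt
      exact max_le (by linarith) (by linarith)
  have hne : ((fun t => max (bus (γ t) - s) 0) '' D).Nonempty :=
    ⟨_, Set.mem_image_of_mem _ ht₁⟩
  have hbdd : BddAbove ((fun t => max (bus (γ t) - s) 0) '' D) := ⟨(t₂ - t₁)/2, himg⟩
  have hzero_mem : (0:ℝ) ∈ (fun t => max (bus (γ t) - s) 0) '' D :=
    ⟨t₁, ht₁, by show max (bus (γ t₁) - s) 0 = 0; rw [hbt₁]; simp⟩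
  have hM0 : 0 ≤ sSup ((fun t => max (bus (γ t) - s) 0) '' D) := le_csSup hbdd hzero_mem
  have hMle : sSup ((fun t => max (bus (γ t) - s) 0) '' D) ≤ (t₂ - t₁)/2 := csSup_le hne himg
  constructor
  · rw [hdist]; linarith
  · by_cases htriv : t₂ - t₁ ≤ 2 * Real.log (1 + Real.sqrt 2)
    · rw [hdist]; linarith
    push_neg at htriv
    have hsq2 : (1:ℝ) ≤ Real.sqrt 2 := by
      nlinarith [Real.sq_sqrt (by norm_num : (0:ℝ) ≤ 2), Real.sqrt_nonneg 2]
    have hlog2pos : 0 < Real.log (1 + Real.sqrt 2) := Real.log_pos (by linarith)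
    have hCh : 0 < Real.cosh ((t₂ - t₁)/2) := Real.cosh_pos _
    have hf : IsGeodesicFrom (fun u => γ (t₁ + u)) (γ t₁) (γ t₂) := by
      refine ⟨?_, ?_, ?_⟩
      · intro a ha b hb
        rw [hγ (t₁+a) (hmemf a ha.1) (t₁+b) (hmemf b hb.1),
          show t₁ + a - (t₁ + b) = a - b by ring]
      · show γ (t₁ + 0) = γ t₁
        norm_num
      · show γ (t₁ + dist (γ t₁) (γ t₂)) = γ t₂
        rw [hdist, show t₁ + (t₂ - t₁) = t₂ by ring]
    have hmD : t₁ + (t₂ - t₁)/2 ∈ D := hmemf _ (by linarith)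
    have hkey : ∀ T, Real.cosh (dist (γ (t₁ + (t₂ - t₁)/2)) (ρ T)) ≤
        (Real.cosh (dist (γ t₁) (ρ T)) + Real.cosh (dist (γ t₂) (ρ T))) /
          (2 * Real.cosh ((t₂ - t₁)/2)) := by
      intro T
      have h := midpoint_cosh_bound hcat hgeod (γ t₁) (γ t₂) (ρ T) _ hf
        (by rw [hdist]; linarith)
      rw [hdist] at h
      exact h
    have hlim1 : Tendsto (fun T => T - dist (γ t₁) (ρ T)) atTop (nhds s) := by
      have h := hbus (γ t₁); rwa [hbt₁] at h
    have hlim2 : Tendsto (fun T => T - dist (γ t₂) (ρ T)) atTop (nhds s) := by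
      have h := hbus (γ t₂); rwa [hbt₂] at h
    have haux : ∀ w : X, Tendsto (fun T => T - dist w (ρ T)) atTop (nhds s) →
        Tendsto (fun T => Real.exp (-T) * Real.cosh (dist w (ρ T))) atTop
          (nhds (Real.exp (-s)/2)) := by
      intro w hw
      have h1 : Tendsto (fun T => Real.exp (dist w (ρ T) - T)) atTop
          (nhds (Real.exp (-s))) := by
        refine (Real.continuous_exp.tendsto _).comp ?_
        have h := hw.neg
        simpa [neg_sub] using h
      have h2 : Tendsto (fun T => Real.exp (-dist w (ρ T) - T)) atTop (nhds 0) := by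
        refine Real.tendsto_exp_atBot.comp ?_
        have heq : (fun T : ℝ => -dist w (ρ T) - T) =
            (fun T : ℝ => (T - dist w (ρ T)) + (-(2*T))) := by
          funext T; ring
        rw [heq]
        have h2t : Tendsto (fun T : ℝ => 2*T) atTop atTop :=
          tendsto_id.const_mul_atTop (by norm_num)
        exact hw.add_atBot (tendsto_neg_atTop_atBot.comp h2t)
      have heq : (fun T => Real.exp (-T) * Real.cosh (dist w (ρ T))) =
          fun T => (Real.exp (dist w (ρ T) - T) + Real.exp (-dist w (ρ T) - T))/2 := by
        funext T
        rw [Real.cosh_eq, show dist w (ρ T) - T = dist w (ρ T) + -T by ring,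
          show -dist w (ρ T) - T = -dist w (ρ T) + -T by ring, Real.exp_add, Real.exp_add]
        ring
      rw [heq]
      have h3 := (h1.add h2).div_const 2
      simpa using h3
    have hWa := haux (γ t₁) hlim1
    have hWb := haux (γ t₂) hlim2
    have hWlim : Tendsto (fun T => Real.exp (-T) *
        (Real.cosh (dist (γ t₁) (ρ T)) + Real.cosh (dist (γ t₂) (ρ T))) /
          Real.cosh ((t₂ - t₁)/2))
        atTop (nhds (Real.exp (-s) / Real.cosh ((t₂ - t₁)/2))) := by
      have h3 := (hWa.add hWb).div_const (Real.cosh ((t₂ - t₁)/2))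
      have heq : (fun T => Real.exp (-T) *
          (Real.cosh (dist (γ t₁) (ρ T)) + Real.cosh (dist (γ t₂) (ρ T))) /
            Real.cosh ((t₂ - t₁)/2)) =
          fun T => (Real.exp (-T) * Real.cosh (dist (γ t₁) (ρ T)) +
            Real.exp (-T) * Real.cosh (dist (γ t₂) (ρ T))) / Real.cosh ((t₂ - t₁)/2) := by
        funext T; ring
      rw [heq]
      have hval : (Real.exp (-s)/2 + Real.exp (-s)/2) / Real.cosh ((t₂ - t₁)/2) =
          Real.exp (-s) / Real.cosh ((t₂ - t₁)/2) := by ring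
      rwa [hval] at h3
    have hloglim : Tendsto (fun T => -Real.log (Real.exp (-T) *
        (Real.cosh (dist (γ t₁) (ρ T)) + Real.cosh (dist (γ t₂) (ρ T))) /
          Real.cosh ((t₂ - t₁)/2)))
        atTop (nhds (s + Real.log (Real.cosh ((t₂ - t₁)/2)))) := by
      have h4 := (hWlim.log (by positivity)).neg
      have hval : -Real.log (Real.exp (-s) / Real.cosh ((t₂ - t₁)/2)) =
          s + Real.log (Real.cosh ((t₂ - t₁)/2)) := by
        rw [Real.log_div (Real.exp_ne_zero _) (ne_of_gt hCh), Real.log_exp]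
        ring
      rwa [hval] at h4
    have hbound : ∀ T, -Real.log (Real.exp (-T) *
        (Real.cosh (dist (γ t₁) (ρ T)) + Real.cosh (dist (γ t₂) (ρ T))) /
          Real.cosh ((t₂ - t₁)/2)) ≤
        T - dist (γ (t₁ + (t₂ - t₁)/2)) (ρ T) := by
      intro T
      have h1 := hkey T
      have hApos := Real.cosh_pos (dist (γ t₁) (ρ T))
      have hBpos := Real.cosh_pos (dist (γ t₂) (ρ T))
      have h3 : Real.exp (dist (γ (t₁ + (t₂ - t₁)/2)) (ρ T)) ≤
          (Real.cosh (dist (γ t₁) (ρ T)) + Real.cosh (dist (γ t₂) (ρ T))) /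
            Real.cosh ((t₂ - t₁)/2) := by
        have he : Real.exp (dist (γ (t₁ + (t₂ - t₁)/2)) (ρ T)) ≤
            2 * Real.cosh (dist (γ (t₁ + (t₂ - t₁)/2)) (ρ T)) := by
          rw [Real.cosh_eq]
          have := (Real.exp_pos (-dist (γ (t₁ + (t₂ - t₁)/2)) (ρ T))).le
          linarith
        calc Real.exp (dist (γ (t₁ + (t₂ - t₁)/2)) (ρ T)) ≤
            2 * Real.cosh (dist (γ (t₁ + (t₂ - t₁)/2)) (ρ T)) := he
          _ ≤ 2 * ((Real.cosh (dist (γ t₁) (ρ T)) + Real.cosh (dist (γ t₂) (ρ T))) /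
              (2 * Real.cosh ((t₂ - t₁)/2))) := by linarith
          _ = (Real.cosh (dist (γ t₁) (ρ T)) + Real.cosh (dist (γ t₂) (ρ T))) /
              Real.cosh ((t₂ - t₁)/2) := by field_simp
      have h4 : dist (γ (t₁ + (t₂ - t₁)/2)) (ρ T) ≤
          Real.log ((Real.cosh (dist (γ t₁) (ρ T)) + Real.cosh (dist (γ t₂) (ρ T))) /
            Real.cosh ((t₂ - t₁)/2)) := by
        have h5 := (Real.log_le_log_iff (Real.exp_pos _) (by positivity)).mpr h3
        rwa [Real.log_exp] at h5
      have h6 : Real.log (Real.exp (-T) *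
          (Real.cosh (dist (γ t₁) (ρ T)) + Real.cosh (dist (γ t₂) (ρ T))) /
            Real.cosh ((t₂ - t₁)/2)) =
          -T + Real.log ((Real.cosh (dist (γ t₁) (ρ T)) + Real.cosh (dist (γ t₂) (ρ T))) /
            Real.cosh ((t₂ - t₁)/2)) := by
        rw [mul_div_assoc, Real.log_mul (Real.exp_ne_zero _) (by positivity), Real.log_exp]
      rw [h6]
      linarith
    have hbusm : s + Real.log (Real.cosh ((t₂ - t₁)/2)) ≤ bus (γ (t₁ + (t₂ - t₁)/2)) :=
      le_of_tendsto_of_tendsto' hloglim (hbus (γ (t₁ + (t₂ - t₁)/2))) hbound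
    have hMm : bus (γ (t₁ + (t₂ - t₁)/2)) - s ≤
        sSup ((fun t => max (bus (γ t) - s) 0) '' D) :=
      le_trans (le_max_left _ _) (le_csSup hbdd ⟨_, hmD, rfl⟩)
    have hcosh_ge : (t₂ - t₁)/2 - Real.log (1 + Real.sqrt 2) ≤
        Real.log (Real.cosh ((t₂ - t₁)/2)) := by
      have h1 : Real.exp ((t₂ - t₁)/2) / 2 ≤ Real.cosh ((t₂ - t₁)/2) := by
        rw [Real.cosh_eq]
        have := (Real.exp_pos (-((t₂ - t₁)/2))).le
        linarith
      have h2 : Real.log (Real.exp ((t₂ - t₁)/2)/2) ≤ Real.log (Real.cosh ((t₂ - t₁)/2)) :=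
        (Real.log_le_log_iff (by positivity) hCh).mpr h1
      rw [Real.log_div (Real.exp_ne_zero _) two_ne_zero, Real.log_exp] at h2
      have h3 : Real.log 2 ≤ Real.log (1 + Real.sqrt 2) :=
        (Real.log_le_log_iff (by norm_num) (by linarith)).mpr (by linarith)
      linarith
    rw [hdist]
    linarith
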